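/- The topological inverse semigroup I_ℕ is weakly ditopological: for every f ∈ I_ℕ and every open neighborhood O of f there exist open neighborhoods U of f, V of f⁻¹f, and W of ff⁻¹ such that {s : ∃ b ∈ U, ∃ idempotent e ∈ W with b = es} ∩ {s : ss⁻¹ ∈ W} ∩ {s : s⁻¹s ∈ V} ⊆ O. -/

import Mathlib

/-- A partial bijection of `ℕ`, encoded as its graph: a functional and
co-functional relation. -/
def IsPartialBij (R : Set (ℕ × ℕ)) : Prop :=
  (∀ x y y', (x, y) ∈ R → (x, y') ∈ R → y = y') ∧
  (∀ x x' y, (x, y) ∈ R → (x', y) ∈ R → x = x')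

/-- The symmetric inverse monoid `I_ℕ` of all partial bijections between
subsets of `ℕ`. -/
def IN : Type := {R : Set (ℕ × ℕ) // IsPartialBij R}

/-- Left-to-right composition of partial bijections. -/
instance : Mul IN :=
  ⟨fun f g => ⟨{p | ∃ y, (p.1, y) ∈ f.1 ∧ (y, p.2) ∈ g.1}, by
    obtain ⟨f, hf1, hf2⟩ := f; obtain ⟨g, hg1, hg2⟩ := g
    constructor
    · rintro x y y' ⟨a, ha1, ha2⟩ ⟨b, hb1, hb2⟩
      cases hf1 x a b ha1 hb1
      exact hg1 a y y' ha2 hb2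
    · rintro x x' y ⟨a, ha1, ha2⟩ ⟨b, hb1, hb2⟩
      cases hg2 a b y ha2 hb2
      exact hf2 x x' a ha1 hb1⟩⟩

/-- The inverse of a partial bijection is its transpose. -/
instance : Inv IN :=
  ⟨fun f => ⟨{p | (p.2, p.1) ∈ f.1},
    ⟨fun x y y' h h' => f.2.2 y y' x h h',
     fun x x' y h h' => f.2.1 y x x' h h'⟩⟩⟩

/-- The canonical Polish semigroup topology on `I_ℕ`, generated by the sets
`U_{x,y} = {h | (x,y) ∈ h}`, `W_x = {h | x ∉ dom h}` and
`W_x⁻¹ = {h | x ∉ im h}`. -/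
instance : TopologicalSpace IN :=
  TopologicalSpace.generateFrom
    ({A | ∃ x y : ℕ, A = {h : IN | (x, y) ∈ h.1}} ∪
     {A | ∃ x : ℕ, A = {h : IN | ∀ y, (x, y) ∉ h.1}} ∪
     {A | ∃ y : ℕ, A = {h : IN | ∀ x, (x, y) ∉ h.1}})

/-!
The sets `O` admitting witnesses `U`, `V`, `W` are closed under supersets and finite
intersections, i.e. they form a filter, so it suffices to treat the subbasic open sets.
For `U_{x,y}` take `U = U_{x,y}`: an idempotent is a partial identity, so `(x,y) ∈ es` forces
`(x,y) ∈ s`. For `W_x` take `W = W_x`, because `ss⁻¹` and `s` have the same domain; dually,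
`V = W_y⁻¹` handles `W_y⁻¹`, because `s⁻¹s` and `s` have the same image.
-/

open Filter Topology

section Ditopological

variable {S : Type*} [Mul S] [Inv S]

def ditopSet (U V W : Set S) : Set S :=
  {s | ∃ b ∈ U, ∃ e : S, e * e = e ∧ e ∈ W ∧ b = e * s} ∩
    {s | s * s⁻¹ ∈ W} ∩ {s | s⁻¹ * s ∈ V}

lemma ditopSet_mono {U U' V V' W W' : Set S} (hU : U ⊆ U') (hV : V ⊆ V') (hW : W ⊆ W') :
    ditopSet U V W ⊆ ditopSet U' V' W' := by
  rintro s ⟨⟨⟨b, hb, e, he, heW, rfl⟩, hsW⟩, hsV⟩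
  exact ⟨⟨⟨_, hU hb, e, he, hW heW, rfl⟩, hW hsW⟩, hV hsV⟩

variable [TopologicalSpace S]

/-- Weak ditopologicity at `f` says exactly that `ditopNhds f ≤ 𝓝 f`. -/
def ditopNhds (f : S) : Filter S where
  sets := {O | ∃ U V W : Set S, IsOpen U ∧ IsOpen V ∧ IsOpen W ∧
    f ∈ U ∧ f⁻¹ * f ∈ V ∧ f * f⁻¹ ∈ W ∧ ditopSet U V W ⊆ O}
  univ_sets := ⟨.univ, .univ, .univ, isOpen_univ, isOpen_univ, isOpen_univ,
    trivial, trivial, trivial, Set.subset_univ _⟩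
  sets_of_superset := fun ⟨U, V, W, hU, hV, hW, hfU, hfV, hfW, hO⟩ hOO' =>
    ⟨U, V, W, hU, hV, hW, hfU, hfV, hfW, hO.trans hOO'⟩
  inter_sets := fun ⟨U, V, W, hU, hV, hW, hfU, hfV, hfW, hO⟩
      ⟨U', V', W', hU', hV', hW', hfU', hfV', hfW', hO'⟩ =>
    ⟨U ∩ U', V ∩ V', W ∩ W', hU.inter hU', hV.inter hV', hW.inter hW',
      ⟨hfU, hfU'⟩, ⟨hfV, hfV'⟩, ⟨hfW, hfW'⟩,
      Set.subset_inter
        ((ditopSet_mono Set.inter_subset_left Set.inter_subset_left Set.inter_subset_left).trans hO)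
        ((ditopSet_mono Set.inter_subset_right Set.inter_subset_right
          Set.inter_subset_right).trans hO')⟩

end Ditopological

namespace IN

variable {f s e : IN} {x y : ℕ}

lemma eq_of_mem_of_mul_self_eq (he : e * e = e) (hxy : (x, y) ∈ e.1) : x = y := by
  obtain ⟨z, hxz, hzy⟩ : (x, y) ∈ (e * e).1 := by rwa [he]
  obtain rfl : y = z := e.2.1 x y z hxy hxz
  exact e.2.2 x y y hxy hzy

lemma mem_of_mem_mul_of_mul_self_eq (he : e * e = e) (h : (x, y) ∈ (e * s).1) : (x, y) ∈ s.1 := by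
  obtain ⟨z, hxz, hzy⟩ := h
  obtain rfl : x = z := eq_of_mem_of_mul_self_eq he hxz
  exact hzy

lemma notMem_dom_mul_inv_iff : (∀ y, (x, y) ∉ (s * s⁻¹).1) ↔ ∀ y, (x, y) ∉ s.1 :=
  ⟨fun h y hxy => h x ⟨y, hxy, hxy⟩, fun h _ ⟨z, hxz, _⟩ => h z hxz⟩

lemma notMem_im_inv_mul_iff : (∀ x, (x, y) ∉ (s⁻¹ * s).1) ↔ ∀ x, (x, y) ∉ s.1 :=
  ⟨fun h x hxy => h y ⟨x, hxy, hxy⟩, fun h _ ⟨_, _, hzy⟩ => h _ hzy⟩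

lemma isOpen_setOf_mem (x y : ℕ) : IsOpen {h : IN | (x, y) ∈ h.1} :=
  .basic _ (.inl (.inl ⟨x, y, rfl⟩))

lemma isOpen_setOf_notMem_dom (x : ℕ) : IsOpen {h : IN | ∀ y, (x, y) ∉ h.1} :=
  .basic _ (.inl (.inr ⟨x, rfl⟩))

lemma isOpen_setOf_notMem_im (y : ℕ) : IsOpen {h : IN | ∀ x, (x, y) ∉ h.1} :=
  .basic _ (.inr ⟨y, rfl⟩)

lemma setOf_mem_mem_ditopNhds (hf : (x, y) ∈ f.1) : {h : IN | (x, y) ∈ h.1} ∈ ditopNhds f :=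
  ⟨_, .univ, .univ, isOpen_setOf_mem x y, isOpen_univ, isOpen_univ, hf, trivial, trivial,
    fun _ ⟨⟨⟨_, hb, _, he, _, hbe⟩, _⟩, _⟩ => mem_of_mem_mul_of_mul_self_eq he (hbe ▸ hb)⟩

lemma setOf_notMem_dom_mem_ditopNhds (hf : ∀ y, (x, y) ∉ f.1) :
    {h : IN | ∀ y, (x, y) ∉ h.1} ∈ ditopNhds f :=
  ⟨.univ, .univ, _, isOpen_univ, isOpen_univ, isOpen_setOf_notMem_dom x, trivial, trivial,
    notMem_dom_mul_inv_iff.2 hf, fun _ ⟨⟨_, hsW⟩, _⟩ => notMem_dom_mul_inv_iff.1 hsW⟩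

lemma setOf_notMem_im_mem_ditopNhds (hf : ∀ x, (x, y) ∉ f.1) :
    {h : IN | ∀ x, (x, y) ∉ h.1} ∈ ditopNhds f :=
  ⟨.univ, _, .univ, isOpen_univ, isOpen_setOf_notMem_im y, isOpen_univ, trivial,
    notMem_im_inv_mul_iff.2 hf, trivial, fun _ ⟨_, hsV⟩ => notMem_im_inv_mul_iff.1 hsV⟩

lemma ditopNhds_le_nhds (f : IN) : ditopNhds f ≤ 𝓝 f := by
  rw [TopologicalSpace.nhds_generateFrom]
  refine le_iInf₂ fun t ⟨hft, ht⟩ => le_principal_iff.2 ?_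
  rcases ht with (⟨x, y, rfl⟩ | ⟨x, rfl⟩) | ⟨y, rfl⟩
  · exact setOf_mem_mem_ditopNhds hft
  · exact setOf_notMem_dom_mem_ditopNhds hft
  · exact setOf_notMem_im_mem_ditopNhds hft

end IN

/-- The topological inverse semigroup `I_ℕ` is weakly ditopological: for every
`f` and open neighborhood `O` of `f` there are open neighborhoods `U` of `f`,
`V` of `f⁻¹f` and `W` of `ff⁻¹` such that
`{s | ∃ b ∈ U, ∃ idempotent e ∈ W, b = es} ∩ {s | ss⁻¹ ∈ W} ∩ {s | s⁻¹s ∈ V} ⊆ O`. -/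
theorem IN_weakly_ditopological :
    ∀ f : IN, ∀ O : Set IN, IsOpen O → f ∈ O →
      ∃ U V W : Set IN, IsOpen U ∧ IsOpen V ∧ IsOpen W ∧
        f ∈ U ∧ f⁻¹ * f ∈ V ∧ f * f⁻¹ ∈ W ∧
        ({s : IN | ∃ b ∈ U, ∃ e : IN, e * e = e ∧ e ∈ W ∧ b = e * s} ∩
          {s : IN | s * s⁻¹ ∈ W} ∩ {s : IN | s⁻¹ * s ∈ V}) ⊆ O :=
  fun f _ hO hf => IN.ditopNhds_le_nhds f (hO.mem_nhds hf)
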